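/- Let λ ∈ Pℓk. Then g̃_λ^{(k)} = ∏_{m ∈ D_{Δ^k(λ)}} (1 − L_m) g_λ^{(k)}; explicitly, K(Δ^k(λ); L(Δ^k(λ)); λ) = Σ_{T ⊆ D_{Δ^k(λ)}} (−1)^{|T|} K(Δ^k(λ); L(Δ^{k+1}(λ)); λ − ε_T), where ε_T := Σ_{t∈T} ε_t. -/

import Mathlib

/-!
Common framework: root ideals, Katalan functions, (generalized) K-k-Schur functions,
lowering operators, bounce paths, the sets `Ω`, and (k+1)-cores.
Vectors `γ ∈ ℤ^ℓ` are modelled as functions `ℕ → ℤ`, with the relevant indices `1,…,ℓ`.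
Symmetric-function identities are stated in `MvPolynomial (Fin N) ℚ` for every `N`.
-/

noncomputable section KkSchur

/-- Complete homogeneous symmetric polynomial of degree `d` in `N` variables over `ℚ`. -/
def hsym (N d : ℕ) : MvPolynomial (Fin N) ℚ :=
  ∑ m : Sym (Fin N) d, (m.1.map MvPolynomial.X).prod

/-- The inhomogeneous version `k_m^{(r)} = Σ_{i=0}^m C(r+i-1,i) h_{m-i}` (zero for `m < 0`). -/
def kpoly (N : ℕ) (r : ℕ) (m : ℤ) : MvPolynomial (Fin N) ℚ :=
  if m < 0 then 0
  else ∑ i ∈ Finset.range (m.toNat + 1), ((r + i - 1).choose i : ℚ) • hsym N (m.toNat - i)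

/-- `k_γ = k_{γ₁}^{(0)} ⋯ k_{γ_ℓ}^{(ℓ-1)}`. -/
def kgamma (N ℓ : ℕ) (γ : ℕ → ℤ) : MvPolynomial (Fin N) ℚ :=
  ∏ i ∈ Finset.Icc 1 ℓ, kpoly N (i - 1) (γ i)

/-- `Δ⁺_ℓ = {(i,j) : 1 ≤ i < j ≤ ℓ}`. -/
def DeltaPlus (ℓ : ℕ) : Finset (ℕ × ℕ) :=
  (Finset.Icc 1 ℓ ×ˢ Finset.Icc 1 ℓ).filter fun p => p.1 < p.2

/-- Root ideal: an upper order ideal of `Δ⁺_ℓ` for `(a,b) ≤ (c,d) ↔ a ≥ c ∧ b ≤ d`. -/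
def IsRootIdeal (ℓ : ℕ) (Ψ : Finset (ℕ × ℕ)) : Prop :=
  Ψ ⊆ DeltaPlus ℓ ∧ ∀ p ∈ Ψ, ∀ q ∈ DeltaPlus ℓ, q.1 ≤ p.1 → p.2 ≤ q.2 → q ∈ Ψ

/-- Indicator (as an integer vector) of the interval `[a,b]`. -/
def epsI (a b : ℕ) : ℕ → ℤ := fun t => if a ≤ t ∧ t ≤ b then 1 else 0

/-- Effect of the lowering operators `∏_{z ∈ T} L_z` on the index vector `γ`. -/
def shiftL (T : Multiset ℕ) (γ : ℕ → ℤ) : ℕ → ℤ := fun t => γ t - T.count t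

/-- Effect of the raising operators `∏_{(i,j) ∈ A} R_{ij}` on the index vector `γ`. -/
def shiftR (A : Finset (ℕ × ℕ)) (γ : ℕ → ℤ) : ℕ → ℤ := fun t =>
  γ t + ((A.filter fun p => p.1 = t).card : ℤ) - ((A.filter fun p => p.2 = t).card : ℤ)

/-- The Katalan function `K(Ψ; M; γ) = ∏_{z∈M}(1-L_z) ∏_{(i,j)∈Δ⁺∖Ψ}(1-R_{ij}) k_γ`,
expanded as a signed sum over sub-multisets of `M` and subsets of `Δ⁺_ℓ ∖ Ψ`. -/
def Katalan (N ℓ : ℕ) (Ψ : Finset (ℕ × ℕ)) (M : Multiset ℕ) (γ : ℕ → ℤ) :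
    MvPolynomial (Fin N) ℚ :=
  (M.powerset.map fun T =>
    ((-1 : ℚ) ^ Multiset.card T) •
      ∑ A ∈ (DeltaPlus ℓ \ Ψ).powerset,
        ((-1 : ℚ) ^ A.card) • kgamma N ℓ (shiftR A (shiftL T γ))).sum

/-- The root ideal `Δ^k(μ) = {(i,j) ∈ Δ⁺_ℓ : k - μ_i + i < j}`. -/
def DeltaK (k ℓ : ℕ) (μ : ℕ → ℤ) : Finset (ℕ × ℕ) :=
  (DeltaPlus ℓ).filter fun p => (k : ℤ) - μ p.1 + p.1 < p.2

/-- `L(R)`: the multiset of second components of `R`. -/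
def Lmul (R : Finset (ℕ × ℕ)) : Multiset ℕ := R.val.map Prod.snd

/-- The bottom `b_μ` of the root ideal `Δ^k(μ)` (0 if the root ideal is empty). -/
def bottomB (k ℓ : ℕ) (μ : ℕ → ℤ) : ℕ := (DeltaK k ℓ μ).sup Prod.fst

/-- `(x,j)` is a removable root of `Ψ`. -/
def IsRemovableAt (ℓ : ℕ) (Ψ : Finset (ℕ × ℕ)) (x j : ℕ) : Prop :=
  (x, j) ∈ Ψ ∧ IsRootIdeal ℓ (Ψ.erase (x, j))

open scoped Classical in
/-- `down_Ψ(x)`: the column of the removable root in row `x` (0 if undefined). -/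
def downF (ℓ : ℕ) (Ψ : Finset (ℕ × ℕ)) (x : ℕ) : ℕ :=
  ((Finset.Icc 1 ℓ).filter fun j => IsRemovableAt ℓ Ψ x j).sup id

open scoped Classical in
/-- `up_Ψ(x)`: the row of the removable root in column `x` (0 if undefined). -/
def upF (ℓ : ℕ) (Ψ : Finset (ℕ × ℕ)) (x : ℕ) : ℕ :=
  ((Finset.Icc 1 ℓ).filter fun j => IsRemovableAt ℓ Ψ j x).sup id

/-- `top_Ψ(x)`: the minimum vertex of the bounce path of `Ψ` containing `x`. -/
def topF (ℓ : ℕ) (Ψ : Finset (ℕ × ℕ)) (x : ℕ) : ℕ :=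
  if h : 0 < upF ℓ Ψ x ∧ upF ℓ Ψ x < x then topF ℓ Ψ (upF ℓ Ψ x) else x
termination_by x
decreasing_by exact h.2

/-- Membership in `P̃ℓk`. -/
def memPt (k ℓ : ℕ) (μ : ℕ → ℤ) : Prop :=
  (∀ i ∈ Finset.Icc 1 ℓ, μ i ≤ k) ∧ ∀ i ∈ Finset.Icc 1 (ℓ - 1), μ (i + 1) ≤ μ i + 1

/-- Membership in `Pℓk` (`k`-bounded partitions of length `ℓ`). -/
def memPk (k ℓ : ℕ) (μ : ℕ → ℤ) : Prop :=
  (∀ i ∈ Finset.Icc 1 ℓ, 0 ≤ μ i ∧ μ i ≤ k) ∧ ∀ i ∈ Finset.Icc 1 (ℓ - 1), μ (i + 1) ≤ μ i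

/-- The (generalized) K-k-Schur function `g_μ^{(k)} = K(Δ^k(μ); L(Δ^{k+1}(μ)); μ)`. -/
def gk (N k ℓ : ℕ) (μ : ℕ → ℤ) : MvPolynomial (Fin N) ℚ :=
  Katalan N ℓ (DeltaK k ℓ μ) (Lmul (DeltaK (k + 1) ℓ μ)) μ

/-- `L_w g_μ^{(k)} = K(Δ^k(μ); L(Δ^{k+1}(μ)); μ - ε_w)`, with `L_w = 0` for `w > ℓ`. -/
def Lg (N k ℓ : ℕ) (w : ℕ) (μ : ℕ → ℤ) : MvPolynomial (Fin N) ℚ :=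
  if w ≤ ℓ then
    Katalan N ℓ (DeltaK k ℓ μ) (Lmul (DeltaK (k + 1) ℓ μ))
      (fun t => μ t - if t = w then 1 else 0)
  else 0

open scoped Classical in
/-- `(∏_{w ∈ S} L_w) g_μ^{(k)}`, with the convention `L_w = 0` for `w > ℓ`. -/
def LgM (N k ℓ : ℕ) (S : Multiset ℕ) (μ : ℕ → ℤ) : MvPolynomial (Fin N) ℚ :=
  if ∀ w ∈ S, w ≤ ℓ then
    Katalan N ℓ (DeltaK k ℓ μ) (Lmul (DeltaK (k + 1) ℓ μ)) (fun t => μ t - S.count t)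
  else 0

/-- The chain conditions (10) defining `h_{μ,z}` (Definition 3.4). -/
def hcond (k ℓ : ℕ) (μ : ℕ → ℤ) (z h : ℕ) : Prop :=
  (∀ t, 1 ≤ t → t ≤ h → μ (z + t) = μ z + 1) ∧
  (∀ c, 1 ≤ c → (upF ℓ (DeltaK k ℓ μ))^[c] z ≠ 0 →
    ∀ t ≤ h, μ ((upF ℓ (DeltaK k ℓ μ))^[c] (z + t)) = μ ((upF ℓ (DeltaK k ℓ μ))^[c] z)) ∧
  (∀ t, 1 ≤ t → t ≤ h →
    μ (upF ℓ (DeltaK k ℓ μ) (topF ℓ (DeltaK k ℓ μ) z + t)) =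
      μ (upF ℓ (DeltaK k ℓ μ) (topF ℓ (DeltaK k ℓ μ) z + 1)))

open scoped Classical in
/-- `h_{μ,z}` of Definition 3.4. -/
def hval (k ℓ : ℕ) (μ : ℕ → ℤ) (z : ℕ) : ℕ :=
  if z = ℓ ∨ μ (z + 1) ≤ μ z then 0
  else ((Finset.Icc 1 (ℓ - z)).filter fun h => hcond k ℓ μ z h).sup id

/-- `cover_{z,i}(μ) = μ + ε_{[up(y+1), up(y+i)]} - ε_{[z+1,z+i]}` where `y = top_{Δ^k(μ)}(z)`. -/
def coverzi (k ℓ : ℕ) (μ : ℕ → ℤ) (z i : ℕ) : ℕ → ℤ :=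
  if i = 0 then μ
  else fun t =>
    μ t +
      epsI (upF ℓ (DeltaK k ℓ μ) (topF ℓ (DeltaK k ℓ μ) z + 1))
        (upF ℓ (DeltaK k ℓ μ) (topF ℓ (DeltaK k ℓ μ) z + i)) t -
      epsI (z + 1) (z + i) t

/-- `cover_z(μ) = cover_{z,h_{μ,z}}(μ)`. -/
def coverz (k ℓ : ℕ) (μ : ℕ → ℤ) (z : ℕ) : ℕ → ℤ := coverzi k ℓ μ z (hval k ℓ μ z)

open scoped Classical in
/-- `h′`: the largest `h ∈ [0, ℓ-z]` with `μ_z + 1 = μ_{z+1} = ⋯ = μ_{z+h}`. -/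
def hprime (ℓ : ℕ) (μ : ℕ → ℤ) (z : ℕ) : ℕ :=
  ((Finset.Icc 0 (ℓ - z)).filter fun h => ∀ t, 1 ≤ t → t ≤ h → μ (z + t) = μ z + 1).sup id

/-- `μ_j = μ + σ - ε_{[z+1, z_j]}`, the partial vector in the recursive choice of quadruples. -/
def stepMu (μ σ : ℕ → ℤ) (z zj : ℕ) : ℕ → ℤ := fun t => μ t + σ t - epsI (z + 1) zj t

/-- Valid sequences of quadruples `(z_j, Ψ_j, y_j, i_j)` in the definition of `Ω_{λ,z,d}`:
`ValidSeq k ℓ μ z d σ lo` means `σ` is the accumulated sum of the interval vectors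
`ε_{[up_{Ψ_j}(y_j+1), up_{Ψ_j}(y_j+i_j)]}` and `lo` is the lower bound `z_j + i_j + 1`
for the next choice. -/
inductive ValidSeq (k ℓ : ℕ) (μ : ℕ → ℤ) (z d : ℕ) : (ℕ → ℤ) → ℕ → Prop where
  | nil : ValidSeq k ℓ μ z d (fun _ => 0) z
  | cons (σ : ℕ → ℤ) (lo zj ij : ℕ) :
      ValidSeq k ℓ μ z d σ lo →
      lo ≤ zj → zj + 1 ≤ z + d →
      memPt k ℓ (stepMu μ σ z zj) →
      topF ℓ (DeltaK k ℓ (stepMu μ σ z zj)) (zj + 1) <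
        topF ℓ (DeltaK k ℓ (stepMu μ σ z zj)) zj →
      1 ≤ ij → ij ≤ hval k ℓ (stepMu μ σ z zj) zj → ij ≤ d - zj →
      upF ℓ (DeltaK k ℓ (stepMu μ σ z zj))
          (topF ℓ (DeltaK k ℓ (stepMu μ σ z zj)) zj + ij) < topF ℓ (DeltaK k ℓ μ) z →
      ValidSeq k ℓ μ z d
        (fun t => σ t +
          epsI (upF ℓ (DeltaK k ℓ (stepMu μ σ z zj))
                  (topF ℓ (DeltaK k ℓ (stepMu μ σ z zj)) zj + 1))
               (upF ℓ (DeltaK k ℓ (stepMu μ σ z zj))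
                  (topF ℓ (DeltaK k ℓ (stepMu μ σ z zj)) zj + ij)) t)
        (zj + ij + 1)

/-- Membership in `Ω_{λ,z,d}`. -/
def OmegaMem (k ℓ : ℕ) (lam : ℕ → ℤ) (z d : ℕ) (ν : ℕ → ℤ) : Prop :=
  ∃ σ lo, ValidSeq k ℓ (fun t => lam t - if t = z then 1 else 0) z d σ lo ∧
    memPt k ℓ ν ∧
    ν = fun t => (lam t - if t = z then 1 else 0) + σ t - epsI (z + 1) (z + d) t

/-- Membership in `Ω_{λ,z} = Ω_{λ,z,h′}`. -/
def OmegaZ (k ℓ : ℕ) (lam : ℕ → ℤ) (z : ℕ) (ν : ℕ → ℤ) : Prop :=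
  OmegaMem k ℓ lam z (hprime ℓ (fun t => lam t - if t = z then 1 else 0) z) ν

/-- Membership in `Ω_{λ,{z}ⁿ}` (iterated `Ω_{·,z}`). -/
def OmegaPow (k ℓ z : ℕ) : ℕ → (ℕ → ℤ) → (ℕ → ℤ) → Prop
  | 0, lam, ν => ν = lam
  | n + 1, lam, ν => ∃ ν', OmegaZ k ℓ lam z ν' ∧ OmegaPow k ℓ z n ν' ν

/-- `D_{Δ^k(λ)} = {down_{Δ^k(λ)}(z) : z ∈ [b_λ]}`. -/
def Dset (k ℓ : ℕ) (lam : ℕ → ℤ) : Finset ℕ :=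
  (Finset.Icc 1 (bottomB k ℓ lam)).image fun z => downF ℓ (DeltaK k ℓ lam) z

/-- `[ℓ]_λ = [ℓ] ∖ D_{Δ^k(λ)}`. -/
def ellSet (k ℓ : ℕ) (lam : ℕ → ℤ) : Finset ℕ := Finset.Icc 1 ℓ \ Dset k ℓ lam

/-- Partitions as weakly decreasing, eventually zero functions on `{1,2,…}`. -/
def IsPartF (κ : ℕ → ℕ) : Prop :=
  (∀ i, 1 ≤ i → κ (i + 1) ≤ κ i) ∧ ∃ n, ∀ i, n < i → κ i = 0

/-- Hook length of the cell `(i,j)` of the partition `κ`. -/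
def hookLen (κ : ℕ → ℕ) (i j : ℕ) : ℕ :=
  (κ i + 1 - j) + Set.ncard {r : ℕ | i < r ∧ j ≤ κ r}

/-- `κ` is a `c`-core. -/
def IsCore (c : ℕ) (κ : ℕ → ℕ) : Prop :=
  IsPartF κ ∧ ∀ i j, 1 ≤ i → 1 ≤ j → j ≤ κ i → hookLen κ i j ≠ c

/-- The bijection `𝔭` from `(k+1)`-cores to `k`-bounded partitions:
`𝔭(κ)_i` counts the cells of row `i` of `κ` with hook length at most `k`. -/
def pCore (k : ℕ) (κ : ℕ → ℕ) (i : ℕ) : ℕ :=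
  Set.ncard {j : ℕ | 1 ≤ j ∧ j ≤ κ i ∧ hookLen κ i j ≤ k}

/-- `κ` is the `(k+1)`-core `𝔠(μ)` of the `k`-bounded partition `μ` of length `≤ ℓ`. -/
def IsCoreOf (k ℓ : ℕ) (κ : ℕ → ℕ) (μ : ℕ → ℤ) : Prop :=
  IsCore (k + 1) κ ∧ ∀ i, 1 ≤ i → (pCore k κ i : ℤ) = if i ≤ ℓ then μ i else 0

/-- `𝔠(μ) ⊆ 𝔠(λ)`, i.e. `w_μ ≤ w_λ` in Bruhat order. -/
def coreLE (k ℓ : ℕ) (μ lam : ℕ → ℤ) : Prop :=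
  ∃ κ1 κ2, IsCoreOf k ℓ κ1 μ ∧ IsCoreOf k ℓ κ2 lam ∧ ∀ i, κ1 i ≤ κ2 i

/-- `𝔠(μ) ⊊ 𝔠(λ)`, i.e. `w_μ < w_λ` in Bruhat order. -/
def coreLT (k ℓ : ℕ) (μ lam : ℕ → ℤ) : Prop :=
  ∃ κ1 κ2, IsCoreOf k ℓ κ1 μ ∧ IsCoreOf k ℓ κ2 lam ∧ (∀ i, κ1 i ≤ κ2 i) ∧ κ1 ≠ κ2

/-!
For a partition `λ`, the root `(z, k - λ_z + z + 1)` lies in `Δ^k(λ)` but not in `Δ^{k+1}(λ)`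
exactly when `1 ≤ z ≤ b_λ`, and these are all the roots of `Δ^k(λ) ∖ Δ^{k+1}(λ)`. Each is the
leftmost root of its row and no root of `Δ^k(λ)` lies weakly south-west of it, so it is the removable
root of that row; since `λ` is weakly decreasing their columns are distinct. Hence
`L(Δ^k(λ)) = L(Δ^{k+1}(λ)) + D_{Δ^k(λ)}` as multisets, and expanding the extra lowering factors
`∏_{m ∈ D}(1 - L_m)` of the Katalan function gives the signed sum.
-/

open Finset

section Katalan

variable {N ℓ : ℕ} {Ψ : Finset (ℕ × ℕ)}

lemma shiftL_cons (a : ℕ) (T : Multiset ℕ) (γ : ℕ → ℤ) :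
    shiftL (a ::ₘ T) γ = shiftL T (shiftL {a} γ) := by
  funext t
  simp only [shiftL, Multiset.count_cons, Multiset.count_singleton]
  push_cast
  ring

lemma shiftL_finset_val (T : Finset ℕ) (γ : ℕ → ℤ) :
    shiftL T.val γ = fun t => γ t - if t ∈ T then 1 else 0 := by
  funext t
  simp only [shiftL, Multiset.count_eq_of_nodup T.nodup, Finset.mem_val]
  split_ifs <;> rfl

lemma katalan_cons (a : ℕ) (M : Multiset ℕ) (γ : ℕ → ℤ) :
    Katalan N ℓ Ψ (a ::ₘ M) γ = Katalan N ℓ Ψ M γ - Katalan N ℓ Ψ M (shiftL {a} γ) := by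
  rw [Katalan, Multiset.powerset_cons, Multiset.map_add, Multiset.sum_add, Multiset.map_map,
    sub_eq_add_neg, Katalan, Katalan, ← Multiset.sum_map_neg]
  congr 2
  refine Multiset.map_congr rfl fun T _ => ?_
  rw [Function.comp_apply, shiftL_cons, Multiset.card_cons, pow_succ, mul_smul, neg_one_smul,
    smul_neg]

lemma katalan_add_finset_val (M : Multiset ℕ) (D : Finset ℕ) (γ : ℕ → ℤ) :
    Katalan N ℓ Ψ (M + D.val) γ =
      ∑ T ∈ D.powerset, ((-1 : ℚ) ^ #T) • Katalan N ℓ Ψ M (shiftL T.val γ) := by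
  classical
  induction D using Finset.induction_on generalizing γ with
  | empty =>
    have : shiftL 0 γ = γ := by funext t; simp [shiftL]
    simp [this]
  | @insert a D ha ih =>
    have hshift : ∀ T ∈ D.powerset, shiftL T.val (shiftL {a} γ) = shiftL (insert a T).val γ :=
      fun T hT => by
        rw [insert_val_of_notMem fun h => ha (mem_powerset.mp hT h), shiftL_cons]
    rw [insert_val_of_notMem ha, Multiset.add_cons, katalan_cons, ih, ih, sum_powerset_insert ha,
      sub_eq_add_neg, ← sum_neg_distrib]
    congr 1
    refine sum_congr rfl fun T hT => ?_
    rw [hshift T hT, card_insert_of_notMem fun h => ha (mem_powerset.mp hT h), pow_succ,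
      mul_smul, neg_one_smul, smul_neg]

end Katalan

section RootIdeal

variable {ℓ : ℕ} {Ψ : Finset (ℕ × ℕ)}

lemma mem_DeltaPlus {p : ℕ × ℕ} : p ∈ DeltaPlus ℓ ↔ 1 ≤ p.1 ∧ p.1 < p.2 ∧ p.2 ≤ ℓ := by
  simp only [DeltaPlus, mem_filter, mem_product, mem_Icc]
  omega

lemma Lmul_eq_add_sdiff {A B : Finset (ℕ × ℕ)} (h : B ⊆ A) : Lmul A = Lmul B + Lmul (A \ B) := by
  rw [Lmul, Lmul, Lmul, ← Multiset.map_add, sdiff_val, add_tsub_cancel_of_le (val_le_iff.mpr h)]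

lemma IsRemovableAt.le_of_mem (hΨ : Ψ ⊆ DeltaPlus ℓ) {x j j' : ℕ} (h : IsRemovableAt ℓ Ψ x j)
    (hj' : (x, j') ∈ Ψ) : j ≤ j' := by
  by_contra! hlt
  have hmem : (x, j') ∈ Ψ.erase (x, j) := mem_erase.mpr ⟨by simp [hlt.ne], hj'⟩
  exact (mem_erase.mp (h.2.2 _ hmem _ (hΨ h.1) le_rfl hlt.le)).1 rfl

lemma downF_eq_of_isRemovableAt (hΨ : Ψ ⊆ DeltaPlus ℓ) {x j : ℕ} (h : IsRemovableAt ℓ Ψ x j) :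
    downF ℓ Ψ x = j := by
  classical
  have hj : j ∈ Icc 1 ℓ := by
    have := mem_DeltaPlus.mp (hΨ h.1)
    exact mem_Icc.mpr ⟨by omega, this.2.2⟩
  refine le_antisymm (Finset.sup_le fun j' hj' => ?_) (le_sup (f := id) (mem_filter.mpr ⟨hj, h⟩))
  exact IsRemovableAt.le_of_mem hΨ (mem_filter.mp hj').2 h.1

end RootIdeal

section DeltaK

variable {k ℓ : ℕ} {μ : ℕ → ℤ}

lemma DeltaK_succ_subset : DeltaK (k + 1) ℓ μ ⊆ DeltaK k ℓ μ :=
  monotone_filter_right _ fun _ _ hp => by push_cast at hp; omega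

lemma mem_DeltaK_sdiff_succ {p : ℕ × ℕ} :
    p ∈ DeltaK k ℓ μ \ DeltaK (k + 1) ℓ μ ↔ p ∈ DeltaPlus ℓ ∧ (p.2 : ℤ) = k - μ p.1 + p.1 + 1 := by
  simp only [DeltaK, mem_sdiff, mem_filter]
  push_cast
  constructor
  · rintro ⟨⟨hp, h⟩, h'⟩
    exact ⟨hp, by have := not_lt.mp fun h'' => h' ⟨hp, h''⟩; omega⟩
  · rintro ⟨hp, h⟩
    exact ⟨⟨hp, by omega⟩, fun ⟨_, h'⟩ => by omega⟩

lemma le_bottomB {p : ℕ × ℕ} (hp : p ∈ DeltaK k ℓ μ) : p.1 ≤ bottomB k ℓ μ :=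
  le_sup (f := Prod.fst) hp

lemma isRemovableAt_of_mem_sdiff (hμ : AntitoneOn μ (Set.Icc 1 ℓ)) {p : ℕ × ℕ}
    (hp : p ∈ DeltaK k ℓ μ \ DeltaK (k + 1) ℓ μ) : IsRemovableAt ℓ (DeltaK k ℓ μ) p.1 p.2 := by
  have hp2 := (mem_DeltaK_sdiff_succ.mp hp).2
  refine ⟨(mem_sdiff.mp hp).1, (erase_subset _ _).trans (filter_subset _ _),
    fun r hr q hq hq1 hq2 => ?_⟩
  obtain ⟨hrp, hr⟩ := mem_erase.mp hr
  have hrΔ := mem_DeltaPlus.mp (mem_filter.mp hr).1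
  have hr' : (k : ℤ) - μ r.1 + r.1 < r.2 := (mem_filter.mp hr).2
  obtain ⟨hq11, -, -⟩ := mem_DeltaPlus.mp hq
  have hμrq : μ r.1 ≤ μ q.1 := hμ ⟨hq11, by omega⟩ ⟨by omega, by omega⟩ hq1
  refine mem_erase.mpr ⟨fun hqp => hrp ?_, mem_filter.mpr ⟨hq, by omega⟩⟩
  rw [hqp] at hq1 hq2 hμrq
  dsimp only at hq1 hq2 hμrq
  have h1 : r.1 = p.1 := by omega
  exact Prod.ext h1 (by rw [h1] at hr'; omega)

end DeltaK

section Partition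

variable {k ℓ : ℕ} {lam : ℕ → ℤ}

lemma memPk.antitoneOn (hlam : memPk k ℓ lam) : AntitoneOn lam (Set.Icc 1 ℓ) :=
  antitoneOn_of_succ_le Set.ordConnected_Icc fun i _ hi hi1 => by
    rw [Order.succ_eq_add_one] at hi1 ⊢
    exact hlam.2 i (mem_Icc.mpr ⟨hi.1, by have := hi1.2; omega⟩)

lemma injOn_snd_DeltaK_sdiff (hlam : AntitoneOn lam (Set.Icc 1 ℓ)) :
    Set.InjOn Prod.snd (↑(DeltaK k ℓ lam \ DeltaK (k + 1) ℓ lam) : Set (ℕ × ℕ)) := by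
  have key : ∀ p ∈ DeltaK k ℓ lam \ DeltaK (k + 1) ℓ lam,
      ∀ q ∈ DeltaK k ℓ lam \ DeltaK (k + 1) ℓ lam, p.1 ≤ q.1 → p.2 = q.2 → p = q :=
    fun p hp q hq hpq h2 => by
    obtain ⟨hpΔ, hp2⟩ := mem_DeltaK_sdiff_succ.mp hp
    obtain ⟨hqΔ, hq2⟩ := mem_DeltaK_sdiff_succ.mp hq
    have hp' := mem_DeltaPlus.mp hpΔ
    have hq' := mem_DeltaPlus.mp hqΔ
    have : lam q.1 ≤ lam p.1 := hlam ⟨hp'.1, by omega⟩ ⟨by omega, by omega⟩ hpq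
    exact Prod.ext (by omega) h2
  intro p hp q hq h2
  rcases le_total p.1 q.1 with h | h
  exacts [key p hp q hq h h2, (key q hq p hp h h2.symm).symm]

lemma exists_mem_DeltaK_sdiff_of_le_bottomB (hlam : memPk k ℓ lam) {z : ℕ} (hz : 1 ≤ z)
    (hzb : z ≤ bottomB k ℓ lam) : ∃ j, (z, j) ∈ DeltaK k ℓ lam \ DeltaK (k + 1) ℓ lam := by
  have hne : (DeltaK k ℓ lam).Nonempty := by
    by_contra! h
    rw [bottomB, h, sup_empty, Nat.bot_eq_zero] at hzb
    omega
  obtain ⟨p, hp, hpb⟩ := exists_mem_eq_sup _ hne Prod.fst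
  have hp' := mem_DeltaPlus.mp (mem_filter.mp hp).1
  have hpk : (k : ℤ) - lam p.1 + p.1 < p.2 := (mem_filter.mp hp).2
  have hzp : z ≤ p.1 := hpb ▸ hzb
  have hlamz := (hlam.1 z (mem_Icc.mpr ⟨hz, by omega⟩)).2
  have hlampz : lam p.1 ≤ lam z := hlam.antitoneOn ⟨hz, by omega⟩ ⟨by omega, by omega⟩ hzp
  refine ⟨((k : ℤ) - lam z + z + 1).toNat, mem_DeltaK_sdiff_succ.mpr ⟨mem_DeltaPlus.mpr ?_, ?_⟩⟩
  · dsimp only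
    omega
  · dsimp only
    omega

lemma Dset_eq_image_snd (hlam : memPk k ℓ lam) :
    Dset k ℓ lam = (DeltaK k ℓ lam \ DeltaK (k + 1) ℓ lam).image Prod.snd := by
  have hdown : ∀ p ∈ DeltaK k ℓ lam \ DeltaK (k + 1) ℓ lam, downF ℓ (DeltaK k ℓ lam) p.1 = p.2 :=
    fun p hp => downF_eq_of_isRemovableAt (filter_subset _ _)
      (isRemovableAt_of_mem_sdiff hlam.antitoneOn hp)
  ext j
  simp only [Dset, mem_image, mem_Icc]
  constructor
  · rintro ⟨z, ⟨hz, hzb⟩, rfl⟩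
    obtain ⟨j, hj⟩ := exists_mem_DeltaK_sdiff_of_le_bottomB hlam hz hzb
    exact ⟨(z, j), hj, (hdown _ hj).symm⟩
  · rintro ⟨p, hp, rfl⟩
    have hpk := (mem_sdiff.mp hp).1
    exact ⟨p.1, ⟨(mem_DeltaPlus.mp (mem_filter.mp hpk).1).1, le_bottomB hpk⟩, hdown p hp⟩

lemma Lmul_DeltaK_eq_add_Dset (hlam : memPk k ℓ lam) :
    Lmul (DeltaK k ℓ lam) = Lmul (DeltaK (k + 1) ℓ lam) + (Dset k ℓ lam).val := by
  rw [Lmul_eq_add_sdiff DeltaK_succ_subset, Dset_eq_image_snd hlam,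
    image_val_of_injOn (injOn_snd_DeltaK_sdiff hlam.antitoneOn)]
  rfl

end Partition

theorem stmt17_general (k ℓ : ℕ) (lam : ℕ → ℤ) (hlam : memPk k ℓ lam) (N : ℕ) :
    Katalan N ℓ (DeltaK k ℓ lam) (Lmul (DeltaK k ℓ lam)) lam =
      ∑ Tt ∈ (Dset k ℓ lam).powerset,
        ((-1 : ℚ) ^ Tt.card) •
          Katalan N ℓ (DeltaK k ℓ lam) (Lmul (DeltaK (k + 1) ℓ lam))
            (fun t => lam t - if t ∈ Tt then 1 else 0) := by
  rw [Lmul_DeltaK_eq_add_Dset hlam, katalan_add_finset_val]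
  simp only [shiftL_finset_val]

/-- Equation (101): `g̃_λ^{(k)} = ∏_{m ∈ D_{Δ^k(λ)}} (1 - L_m) g_λ^{(k)}`, explicitly
`K(Δ^k(λ); Δ^k(λ); λ) = Σ_{T ⊆ D_{Δ^k(λ)}} (-1)^{|T|} K(Δ^k(λ); Δ^{k+1}(λ); λ - ε_T)`. -/
theorem stmt17 (k ℓ : ℕ) (hℓ : 1 ≤ ℓ) (lam : ℕ → ℤ) (hlam : memPk k ℓ lam) (N : ℕ) :
    Katalan N ℓ (DeltaK k ℓ lam) (Lmul (DeltaK k ℓ lam)) lam =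
      ∑ Tt ∈ (Dset k ℓ lam).powerset,
        ((-1 : ℚ) ^ Tt.card) •
          Katalan N ℓ (DeltaK k ℓ lam) (Lmul (DeltaK (k + 1) ℓ lam))
            (fun t => lam t - if t ∈ Tt then 1 else 0) :=
  stmt17_general k ℓ lam hlam N

end KkSchur
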